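/- arXiv:1205.6487 — 4 statements merged into one kernel-verified Lean document; each statement's English description precedes it below -/
import Mathlib

section
/- Let a ≥ b ≥ 1 be integers, n = a + b + 2, and let y_1 ≥ y_2 ≥ y_3 be the (real) roots of p_{a,b}(x) = x³ − (a+b+4)x² + (ab+2a+2b+5)x − (a+b+2). Then the double star T(a,b) has exactly σ = 2 Laplacian eigenvalues strictly larger than its average degree 2 − 2/n, and S_2(T(a,b)) = y_1 + y_2 = n + 2 − y_3. -/
open Polynomial

namespace LapPaper

variable {V : Type} [Fintype V] [DecidableEq V]

/-- The multiset of Laplacian eigenvalues of `G` (with multiplicity), given as the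
real roots of the characteristic polynomial of the Laplacian matrix `L = D - A`. -/
noncomputable def lapSpectrum (G : SimpleGraph V) [DecidableRel G.Adj] : Multiset ℝ :=
  (G.lapMatrix ℝ).charpoly.roots

/-- The average degree `d̄ = 2|E|/n` of a graph. -/
noncomputable def avgDeg (G : SimpleGraph V) [DecidableRel G.Adj] : ℝ :=
  2 * G.edgeFinset.card / Fintype.card V

/-- The Laplacian energy `LE(G) = ∑_i |μ_i - d̄|`. -/
noncomputable def LE (G : SimpleGraph V) [DecidableRel G.Adj] : ℝ :=
  ((lapSpectrum G).map (fun x => |x - avgDeg G|)).sum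

/-- `Sk G k` is the sum of the `k` largest Laplacian eigenvalues `μ_1 + ⋯ + μ_k` of `G`. -/
noncomputable def Sk (G : SimpleGraph V) [DecidableRel G.Adj] (k : ℕ) : ℝ :=
  ((((lapSpectrum G).sort (· ≤ ·)).reverse).take k).sum

/-- The number `σ` of Laplacian eigenvalues of `G` strictly larger than the average degree. -/
noncomputable def sigma (G : SimpleGraph V) [DecidableRel G.Adj] : ℕ :=
  Multiset.card ((lapSpectrum G).filter (fun x => avgDeg G < x))

/-- The double star `T(a,b)` on `a + b + 2` vertices: vertex `0` is adjacent to vertex `1`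
and to the `a` leaves `2, …, a+1`; vertex `1` is adjacent to the `b` leaves `a+2, …, a+b+1`. -/
def doubleStar (a b : ℕ) : SimpleGraph (Fin (a + b + 2)) :=
  SimpleGraph.fromRel (fun u v =>
    (u.1 = 0 ∧ v.1 = 1) ∨ (u.1 = 0 ∧ 2 ≤ v.1 ∧ v.1 < a + 2) ∨ (u.1 = 1 ∧ a + 2 ≤ v.1))

noncomputable instance (a b : ℕ) : DecidableRel (doubleStar a b).Adj := Classical.decRel _

/-- The star on `n` vertices: vertex `0` is adjacent to all other vertices. -/
def starGraph (n : ℕ) : SimpleGraph (Fin n) :=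
  SimpleGraph.fromRel (fun u _ => u.1 = 0)

noncomputable instance (n : ℕ) : DecidableRel (starGraph n).Adj := Classical.decRel _

end LapPaper

/-!
After reordering the vertices as (hubs, leaves of hub `0`, leaves of hub `1`), the Laplacian of
`T(a,b)` is the block matrix `[[H, -K], [-Kᵀ, 1]]` with `H = [[a+1, -1], [-1, b+1]]` and `K` the
hub–leaf incidence matrix. Taking the Schur complement of the identity block gives
`χ(x) = (x - 1)^(a+b-2) · x · p_{a,b}(x)`, so the spectrum is `0`, `1` with multiplicity
`a + b - 2`, and the roots of `p_{a,b}`. From `p(1) = ab > 0`, `p(2) = 2ab - a - b ≥ 0` and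
`y₁ + y₂ + y₃ = a + b + 4` one gets `y₃ < 1 < 2 ≤ y₂`, while `1 ≤ 2 - 2/n < 2`; hence exactly
`y₁, y₂` exceed the average degree and they are the two largest eigenvalues.
-/

namespace LapPaper

open Matrix

section BlockDeterminant

variable {R m n : Type*} [CommRing R] [Fintype m] [Fintype n] [DecidableEq m] [DecidableEq n]

/-- A Schur complement that never inverts `d`: right-multiply by `fromBlocks (d • 1) 0 (-C) 1`. -/
theorem det_fromBlocks_smul_one_mul_pow (A : Matrix m m R) (B : Matrix m n R)
    (C : Matrix n m R) (d : R) :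
    (fromBlocks A B C (d • 1)).det * d ^ Fintype.card m =
      (d • A - B * C).det * d ^ Fintype.card n := by
  have key : fromBlocks A B C (d • 1) * fromBlocks (d • 1) 0 (-C) 1 =
      fromBlocks (d • A - B * C) B 0 (d • 1) := by
    simp [fromBlocks_multiply, sub_eq_add_neg]
  simpa [det_fromBlocks_zero₁₂, det_fromBlocks_zero₂₁, det_smul] using congrArg det key

end BlockDeterminant

section LargestElements

variable {α : Type*} [LinearOrder α]

theorem sort_le_reverse (s : Multiset α) : (s.sort (· ≤ ·)).reverse = s.sort (· ≥ ·) :=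
  List.Perm.eq_of_pairwise' (r := (· ≥ ·)) (List.pairwise_reverse.2 (s.pairwise_sort _))
    (s.pairwise_sort _) (by rw [← Multiset.coe_eq_coe, Multiset.coe_reverse, Multiset.sort_eq,
      Multiset.sort_eq])

theorem sum_take_two_sort_reverse_cons_cons [AddCommMonoid α] {x y : α} {t : Multiset α}
    (hyx : y ≤ x) (ht : ∀ z ∈ t, z ≤ y) :
    (((x ::ₘ y ::ₘ t).sort (· ≤ ·)).reverse.take 2).sum = x + y := by
  have hx : ∀ z ∈ y ::ₘ t, z ≤ x := by simpa using ⟨hyx, fun z hz => (ht z hz).trans hyx⟩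
  rw [sort_le_reverse, Multiset.sort_cons _ _ _ hx, Multiset.sort_cons _ _ _ ht]
  simp

theorem filter_lt_cons_cons {c x y : α} {t : Multiset α} (hx : c < x) (hy : c < y)
    (ht : ∀ z ∈ t, z ≤ c) : (x ::ₘ y ::ₘ t).filter (c < ·) = {x, y} := by
  rw [Multiset.filter_cons_of_pos _ hx, Multiset.filter_cons_of_pos _ hy,
    Multiset.filter_eq_nil.2 fun z hz => not_lt.2 (ht z hz)]
  rfl

end LargestElements

theorem _root_.SimpleGraph.reindex_lapMatrix {V W R : Type*} [Fintype V] [Fintype W]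
    [DecidableEq V] [DecidableEq W] [Ring R] (G : SimpleGraph V) [DecidableRel G.Adj] (e : V ≃ W) :
    reindex e e (G.lapMatrix R) =
      diagonal (fun w => ∑ w', reindex e e (G.adjMatrix R) w w') - reindex e e (G.adjMatrix R) := by
  ext w w'
  simp [SimpleGraph.lapMatrix, SimpleGraph.degMatrix, diagonal_apply,
    G.degree_eq_sum_if_adj (R := R), ← e.symm.sum_comp]

section DoubleStar

variable {a b : ℕ}

def doubleStarEquiv (a b : ℕ) : Fin 2 ⊕ (Fin a ⊕ Fin b) ≃ Fin (a + b + 2) :=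
  (Equiv.sumCongr (Equiv.refl _) finSumFinEquiv).trans
    (finSumFinEquiv.trans (finCongr (Nat.add_comm 2 (a + b))))

@[simp] lemma doubleStarEquiv_inl_val (i : Fin 2) : (doubleStarEquiv a b (.inl i)).val = i := rfl
@[simp] lemma doubleStarEquiv_inr_inl_val (l : Fin a) :
    (doubleStarEquiv a b (.inr (.inl l))).val = 2 + l := rfl
@[simp] lemma doubleStarEquiv_inr_inr_val (l : Fin b) :
    (doubleStarEquiv a b (.inr (.inr l))).val = 2 + (a + l) := rfl

lemma doubleStar_adj_iff (u v : Fin (a + b + 2)) :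
    (doubleStar a b).Adj u v ↔ u.val ≠ v.val ∧
      ((u.val = 0 ∧ v.val = 1) ∨ (u.val = 0 ∧ 2 ≤ v.val ∧ v.val < a + 2) ∨
        (u.val = 1 ∧ a + 2 ≤ v.val) ∨ (v.val = 0 ∧ u.val = 1) ∨
        (v.val = 0 ∧ 2 ≤ u.val ∧ u.val < a + 2) ∨ (v.val = 1 ∧ a + 2 ≤ u.val)) := by
  simp only [doubleStar, SimpleGraph.fromRel_adj, ne_eq, Fin.ext_iff, or_assoc]

def leafHub : Fin a ⊕ Fin b → Fin 2 := Sum.elim (fun _ => 0) (fun _ => 1)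

def hubLeafIncidence (a b : ℕ) : Matrix (Fin 2) (Fin a ⊕ Fin b) ℝ :=
  of fun i l => if leafHub l = i then 1 else 0

lemma hubLeafIncidence_mul_transpose :
    hubLeafIncidence a b * (hubLeafIncidence a b)ᵀ = !![(a : ℝ), 0; 0, b] := by
  ext i j
  fin_cases i <;> fin_cases j <;>
    simp [hubLeafIncidence, leafHub, mul_apply, Fintype.sum_sum_type]

lemma adjMatrix_doubleStar_reindex :
    reindex (doubleStarEquiv a b).symm (doubleStarEquiv a b).symm ((doubleStar a b).adjMatrix ℝ) =
      fromBlocks !![0, 1; 1, 0] (hubLeafIncidence a b) (hubLeafIncidence a b)ᵀ 0 := by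
  ext (i | l | l) (j | k | k)
  all_goals simp only [reindex_apply, submatrix_apply, Equiv.symm_symm,
    SimpleGraph.adjMatrix_apply, doubleStar_adj_iff, doubleStarEquiv_inl_val,
    doubleStarEquiv_inr_inl_val, doubleStarEquiv_inr_inr_val, fromBlocks_apply₁₁,
    fromBlocks_apply₁₂, fromBlocks_apply₂₁, fromBlocks_apply₂₂, hubLeafIncidence, of_apply,
    transpose_apply, Matrix.zero_apply, leafHub, Sum.elim_inl, Sum.elim_inr]
  all_goals try fin_cases i
  all_goals try fin_cases j
  all_goals simp
  all_goals omega

lemma lapMatrix_doubleStar_reindex :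
    reindex (doubleStarEquiv a b).symm (doubleStarEquiv a b).symm ((doubleStar a b).lapMatrix ℝ) =
      fromBlocks !![(a : ℝ) + 1, -1; -1, (b : ℝ) + 1] (-hubLeafIncidence a b)
        (-(hubLeafIncidence a b)ᵀ) 1 := by
  rw [SimpleGraph.reindex_lapMatrix, adjMatrix_doubleStar_reindex]
  ext (i | l | l) (j | k | k)
  all_goals try fin_cases i
  all_goals try fin_cases j
  all_goals simp only [Matrix.sub_apply, diagonal_apply, Sum.inl.injEq, Sum.inr.injEq, reduceCtorEq]
  all_goals simp [Fintype.sum_sum_type, hubLeafIncidence, leafHub, one_apply]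
  all_goals ring

noncomputable def doubleStarCubic (a b : ℕ) : ℝ[X] :=
  X ^ 3 - C ((a : ℝ) + b + 4) * X ^ 2 + C ((a : ℝ) * b + 2 * a + 2 * b + 5) * X
    - C ((a : ℝ) + b + 2)

lemma doubleStarCubic_monic : (doubleStarCubic a b).Monic := by
  unfold doubleStarCubic
  monicity!

lemma det_doubleStar_schurComplement :
    ((X - 1 : ℝ[X]) • charmatrix !![(a : ℝ) + 1, -1; -1, (b : ℝ) + 1] -
      (hubLeafIncidence a b * (hubLeafIncidence a b)ᵀ).map C).det = X * doubleStarCubic a b := by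
  rw [hubLeafIncidence_mul_transpose, det_fin_two]
  simp [doubleStarCubic, Matrix.smul_apply, map_ofNat]
  ring

lemma charpoly_doubleStar (hab : 2 ≤ a + b) :
    ((doubleStar a b).lapMatrix ℝ).charpoly =
      (X - 1) ^ (a + b - 2) * (X * doubleStarCubic a b) := by
  rw [← charpoly_reindex (doubleStarEquiv a b).symm, lapMatrix_doubleStar_reindex]
  have key := det_fromBlocks_smul_one_mul_pow (charmatrix !![(a : ℝ) + 1, -1; -1, (b : ℝ) + 1])
    ((hubLeafIncidence a b).map C) ((hubLeafIncidence a b)ᵀ.map C) (X - 1)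
  rw [← Matrix.map_mul, det_doubleStar_schurComplement, Fintype.card_fin, Fintype.card_sum,
    Fintype.card_fin, Fintype.card_fin, ← Nat.sub_add_cancel hab, pow_add] at key
  have hX : (X - 1 : ℝ[X]) ^ 2 ≠ 0 := pow_ne_zero 2 (by simpa using X_sub_C_ne_zero (1 : ℝ))
  refine mul_right_cancel₀ hX ?_
  rw [charpoly, charmatrix_fromBlocks, charmatrix_one, ← smul_one_eq_diagonal,
    Matrix.map_neg _ (map_neg C), Matrix.map_neg _ (map_neg C), neg_neg, neg_neg, key]
  ring

lemma lapSpectrum_doubleStar (hab : 2 ≤ a + b) :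
    lapSpectrum (doubleStar a b) =
      Multiset.replicate (a + b - 2) 1 + (0 ::ₘ (doubleStarCubic a b).roots) := by
  have hX1 : (X - 1 : ℝ[X]) = X - C 1 := by rw [C_1]
  rw [lapSpectrum, charpoly_doubleStar hab, hX1, roots_mul, roots_pow, roots_X_sub_C,
    roots_mul, roots_X, Multiset.nsmul_singleton, Multiset.singleton_add]
  · exact mul_ne_zero X_ne_zero doubleStarCubic_monic.ne_zero
  · exact mul_ne_zero (pow_ne_zero _ (X_sub_C_ne_zero 1))
      (mul_ne_zero X_ne_zero doubleStarCubic_monic.ne_zero)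

lemma doubleStarCubic_roots_bounds (ha : 1 ≤ a) (hb : 1 ≤ b) {y1 y2 y3 : ℝ} (h12 : y2 ≤ y1)
    (h23 : y3 ≤ y2) (hroots : (doubleStarCubic a b).roots = {y1, y2, y3}) :
    y1 + y2 + y3 = a + b + 4 ∧ y3 < 1 ∧ 2 ≤ y2 := by
  have hdeg : (doubleStarCubic a b).natDegree = 3 := by unfold doubleStarCubic; compute_degree!
  have hfactor : (X - C y1) * ((X - C y2) * (X - C y3)) = doubleStarCubic a b := by
    have h := prod_multiset_X_sub_C_of_monic_of_roots_card_eq doubleStarCubic_monic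
      (by rw [hroots, hdeg]; rfl)
    rw [hroots] at h
    simpa using h
  have heval (x : ℝ) : x ^ 3 - (a + b + 4) * x ^ 2 + (a * b + 2 * a + 2 * b + 5) * x - (a + b + 2)
      = (x - y1) * ((x - y2) * (x - y3)) := by
    simpa [doubleStarCubic] using (congrArg (eval x) hfactor).symm
  have ha' : (1 : ℝ) ≤ a := by exact_mod_cast ha
  have hb' : (1 : ℝ) ≤ b := by exact_mod_cast hb
  have hsum : y1 + y2 + y3 = a + b + 4 := by
    linear_combination (1/2) * heval 1 + (1/2) * heval (-1) - heval 0
  refine ⟨hsum, ?_, ?_⟩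
  · by_contra! h
    have h1 := heval 1
    nlinarith [mul_nonneg (sub_nonneg.2 (h.trans h23)) (sub_nonneg.2 h)]
  · by_contra! h
    have hpos : 0 < (2 - y2) * (2 - y3) := mul_pos (by linarith) (by linarith)
    have hy1 : y1 ≤ 2 := by
      have h2 := heval 2
      nlinarith [mul_nonneg (sub_nonneg.2 ha') (sub_nonneg.2 hb')]
    linarith

end DoubleStar

/-- Let `a ≥ b ≥ 1`, `n = a + b + 2`, and let `y₁ ≥ y₂ ≥ y₃` be the real
roots of `p_{a,b}(x) = x³ - (a+b+4)x² + (ab+2a+2b+5)x - (a+b+2)`. Then the double star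
`T(a,b)` has exactly `2` Laplacian eigenvalues strictly larger than its average degree
`2 - 2/n`, and `S₂(T(a,b)) = y₁ + y₂ = n + 2 - y₃`. -/
theorem doubleStar_sigma_and_S2 (a b : ℕ) (hab : b ≤ a) (hb : 1 ≤ b)
    (n : ℕ) (hn : n = a + b + 2) (y1 y2 y3 : ℝ) (h12 : y2 ≤ y1) (h23 : y3 ≤ y2)
    (hroots : (X ^ 3 - C ((a : ℝ) + b + 4) * X ^ 2 + C ((a : ℝ) * b + 2 * a + 2 * b + 5) * X
        - C ((a : ℝ) + b + 2)).roots = {y1, y2, y3}) :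
    Multiset.card ((lapSpectrum (doubleStar a b)).filter (fun x => 2 - 2 / (n : ℝ) < x)) = 2 ∧
      Sk (doubleStar a b) 2 = y1 + y2 ∧ y1 + y2 = (n : ℝ) + 2 - y3 := by
  obtain ⟨hsum, hy3, hy2⟩ := doubleStarCubic_roots_bounds (hb.trans hab) hb h12 h23 hroots
  have hspec : lapSpectrum (doubleStar a b) =
      y1 ::ₘ y2 ::ₘ y3 ::ₘ 0 ::ₘ Multiset.replicate (a + b - 2) 1 := by
    rw [lapSpectrum_doubleStar (by omega), doubleStarCubic, hroots]
    simp only [Multiset.insert_eq_cons, ← Multiset.singleton_add]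
    abel
  have hrest : ∀ z ∈ y3 ::ₘ 0 ::ₘ Multiset.replicate (a + b - 2) (1 : ℝ), z ≤ 1 := by
    simp only [Multiset.mem_cons, Multiset.mem_replicate]
    rintro z (rfl | rfl | ⟨-, rfl⟩) <;> linarith
  have hn2 : (2 : ℝ) ≤ n := by exact_mod_cast (show 2 ≤ n by omega)
  have hc1 : 1 ≤ 2 - 2 / (n : ℝ) := by
    linarith [(div_le_one (by linarith : (0 : ℝ) < n)).2 hn2]
  have hc2 : 2 - 2 / (n : ℝ) < 2 := by
    have : 0 < 2 / (n : ℝ) := by positivity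
    linarith
  refine ⟨?_, ?_, ?_⟩
  · rw [hspec, filter_lt_cons_cons (by linarith) (by linarith) fun z hz => (hrest z hz).trans hc1]
    rfl
  · rw [Sk, hspec,
      sum_take_two_sort_reverse_cons_cons h12 fun z hz => (hrest z hz).trans (by linarith)]
  · rw [hn]; push_cast; linarith

end LapPaper
end

section
/- Let T be a tree with n vertices and let σ be the number of Laplacian eigenvalues of T that are strictly larger than the average degree d̄ = 2 − 2/n. If the inequality S_k(T) < n − 2 + 2k − 2k/n holds for k = σ, then it holds for every integer k with 1 ≤ k ≤ n. -/
open Polynomial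

/-! Since `S_k - k d̄ = ∑_{i ≤ k} (μ_i - d̄)` and, the `μ_i` being sorted decreasingly, the summand
`μ_i - d̄` is positive exactly for `i ≤ σ`, the quantity `S_k - k d̄` is maximal at `k = σ`.
With `d̄ = 2 - 2/n` the hypothesis says this maximum is below `n - 2`. -/

namespace List

variable {α : Type*}

theorem filter_eq_take_countP {p : α → Bool} {l : List α}
    (hl : l.Pairwise fun a b => p b → p a) : l.filter p = l.take (l.countP p) := by
  induction l with
  | nil => rfl
  | cons a l ih =>
    rw [pairwise_cons] at hl
    by_cases ha : p a
    · simp [ha, ih hl.2]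
    · have hl' : ∀ b ∈ l, ¬p b := fun b hb => mt (hl.1 b hb) ha
      simp [ha, filter_eq_nil_iff.2 hl', countP_eq_zero.2 hl']

section OrderedAddCommMonoid

variable [AddCommMonoid α] [LinearOrder α] [IsOrderedAddMonoid α]

theorem sum_le_sum_filter_pos (l : List α) : l.sum ≤ (l.filter (0 < ·)).sum := by
  induction l with
  | nil => rfl
  | cons a l ih =>
    by_cases ha : 0 < a
    · simpa [filter_cons, ha] using add_le_add le_rfl ih
    · simpa [filter_cons, ha] using add_le_add (not_lt.1 ha) ih

theorem sum_take_le_sum_filter_pos (l : List α) (k : ℕ) :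
    (l.take k).sum ≤ (l.filter (0 < ·)).sum :=
  (sum_le_sum_filter_pos _).trans <|
    ((take_sublist k l).filter _).sum_le_sum fun _ hx => (of_decide_eq_true (mem_filter.1 hx).2).le

theorem sum_take_le_sum_take_countP_pos {l : List α} (hl : l.Pairwise (· ≥ ·)) (k : ℕ) :
    (l.take k).sum ≤ (l.take (l.countP (0 < ·))).sum := by
  have hpos : l.Pairwise fun a b => decide (0 < b) → decide (0 < a) :=
    hl.imp fun hab hb => by simpa using (of_decide_eq_true hb).trans_le hab
  rw [← filter_eq_take_countP hpos]
  exact sum_take_le_sum_filter_pos l k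

end OrderedAddCommMonoid

theorem sum_take_sub_nsmul_le [AddCommGroup α] [LinearOrder α] [IsOrderedAddMonoid α]
    {l : List α} (hl : l.Pairwise (· ≥ ·)) (c : α) {k : ℕ} (hk : k ≤ l.length) :
    (l.take k).sum - k • c ≤ (l.take (l.countP (c < ·))).sum - l.countP (c < ·) • c := by
  have hsum : ∀ j ≤ l.length, ((l.map (· - c)).take j).sum = (l.take j).sum - j • c := by
    intro j hj
    simp [← map_take, sub_eq_add_neg, sum_map_add, hj]
  have hcount : (l.map (· - c)).countP (0 < ·) = l.countP (c < ·) := by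
    simp [countP_map, Function.comp_def, sub_pos]
  have hmax := sum_take_le_sum_take_countP_pos (l := l.map (· - c))
    (pairwise_map.2 (hl.imp fun hab => sub_le_sub_right hab c)) k
  rwa [hcount, hsum _ hk, hsum _ countP_le_length] at hmax

end List

namespace LapPaper

theorem card_lapSpectrum {V : Type} [Fintype V] [DecidableEq V]
    (G : SimpleGraph V) [DecidableRel G.Adj] :
    Multiset.card (lapSpectrum G) = Fintype.card V := by
  simp [lapSpectrum, (G.posSemidef_lapMatrix ℝ).isHermitian.roots_charpoly_eq_eigenvalues]

theorem Sk_lt_of_S_sigma_lt_general {V : Type} [Fintype V] [DecidableEq V]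
    (T : SimpleGraph V) [DecidableRel T.Adj] (n : ℕ) (hcard : Fintype.card V = n)
    (σ : ℕ)
    (hσ : σ = Multiset.card ((lapSpectrum T).filter (fun x => 2 - 2 / (n : ℝ) < x)))
    (hS : Sk T σ < (n : ℝ) - 2 + 2 * σ - 2 * σ / n) :
    ∀ k : ℕ, 1 ≤ k → k ≤ n → Sk T k < (n : ℝ) - 2 + 2 * k - 2 * k / n := by
  intro k _ hkn
  set l := ((lapSpectrum T).sort (· ≤ ·)).reverse
  have hl : (l : Multiset ℝ) = lapSpectrum T := by simp [l]
  have hsorted : l.Pairwise (· ≥ ·) := List.pairwise_reverse.2 (Multiset.pairwise_sort _ _)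
  have hlen : l.length = n := by rw [← Multiset.coe_card, hl, card_lapSpectrum, hcard]
  have hσl : σ = l.countP (2 - 2 / (n : ℝ) < ·) := by
    rw [hσ, ← hl, Multiset.filter_coe, Multiset.coe_card, List.countP_eq_length_filter]
  have hmax : Sk T k - k • (2 - 2 / (n : ℝ)) ≤ Sk T σ - σ • (2 - 2 / (n : ℝ)) := by
    rw [hσl]
    exact List.sum_take_sub_nsmul_le hsorted _ (hlen ▸ hkn)
  simp only [nsmul_eq_mul] at hmax
  linarith [show (k : ℝ) * (2 - 2 / n) = 2 * k - 2 * k / n by ring,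
    show (σ : ℝ) * (2 - 2 / n) = 2 * σ - 2 * σ / n by ring]

/-- Let `T` be a tree with `n` vertices and let `σ` be the number of
Laplacian eigenvalues of `T` strictly larger than the average degree `d̄ = 2 - 2/n`.
If `S_k(T) < n - 2 + 2k - 2k/n` holds for `k = σ`, then it holds for all `1 ≤ k ≤ n`. -/
theorem Sk_lt_of_S_sigma_lt {V : Type} [Fintype V] [DecidableEq V]
    (T : SimpleGraph V) [DecidableRel T.Adj] (n : ℕ) (hcard : Fintype.card V = n)
    (hT : T.IsTree) (σ : ℕ)
    (hσ : σ = Multiset.card ((lapSpectrum T).filter (fun x => 2 - 2 / (n : ℝ) < x)))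
    (hS : Sk T σ < (n : ℝ) - 2 + 2 * σ - 2 * σ / n) :
    ∀ k : ℕ, 1 ≤ k → k ≤ n → Sk T k < (n : ℝ) - 2 + 2 * k - 2 * k / n :=
  Sk_lt_of_S_sigma_lt_general T n hcard σ hσ hS

end LapPaper
end

section
/- (Wielandt) Let A, B, C be Hermitian matrices of order n such that A = B + C, and for a Hermitian matrix M let λ_1(M) ≥ λ_2(M) ≥ ⋯ ≥ λ_n(M) denote its eigenvalues in nonincreasing order. Then for every subset I ⊆ {1, 2, …, n}, ∑_{i ∈ I} λ_i(A) ≤ ∑_{i=1}^{|I|} λ_i(B) + ∑_{i ∈ I} λ_i(C). -/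
/-!
Fix `t ∈ ℝ` and let `N = (B - t)₊` be the positive part of `B - t`. Then `D = C + N` dominates
both `C` and `A - t = (B - t) + C` in the Loewner order, so by Weyl's monotonicity principle
`γ_i ≤ δ_i` and `α_i - t ≤ δ_i` for the sorted eigenvalues `δ` of `D`. Hence
`∑_{i ∈ I} (α_i - t - γ_i) ≤ ∑_{i ∈ I} (δ_i - γ_i) ≤ tr D - tr C = tr N = ∑_j (β_j - t)₊`,
and the choice `t = β_k`, `k = |I|`, turns the right-hand side into `∑_{j ≤ k} β_j - k t`.

Weyl's principle is the Courant–Fischer dimension count: some unit vector lies in the span of the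
top `i` eigenvectors of `P` and of the bottom `n - i + 1` eigenvectors of `Q`, and its Rayleigh
quotients separate `λ_i(P)` from `λ_i(Q)`.
-/

open Finset
open scoped InnerProductSpace

theorem exists_perm_comp_eq_of_map_univ_eq {ι β : Type*} [Fintype ι] [DecidableEq β]
    {f g : ι → β} (h : univ.val.map f = univ.val.map g) : ∃ σ : Equiv.Perm ι, f ∘ σ = g := by
  have hfiber : ∀ b, Fintype.card {i // g i = b} = Fintype.card {i // f i = b} := fun b => by
    have := congrArg (Multiset.count b) h.symm
    simp only [Multiset.count_map, ← Finset.filter_val, ← Finset.card_def] at this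
    simpa [Fintype.card_subtype, eq_comm] using this
  exact ⟨Equiv.ofFiberEquiv fun b => Fintype.equivOfCardEq (hfiber b),
    funext (Equiv.ofFiberEquiv_map _)⟩

section Rayleigh

variable {𝕜 E ι : Type*} [RCLike 𝕜] [NormedAddCommGroup E] [InnerProductSpace 𝕜 E] [Fintype ι]
  {T : E →ₗ[𝕜] E} {e : ι → ℝ} (v : OrthonormalBasis ι 𝕜 E)

theorem OrthonormalBasis.re_inner_map_self_eq (hv : ∀ j, T (v j) = (e j : 𝕜) • v j) (x : E) :
    RCLike.re ⟪x, T x⟫_𝕜 = ∑ j, e j * ‖⟪v j, x⟫_𝕜‖ ^ 2 := by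
  have hTx : T x = ∑ j, (e j : 𝕜) • ⟪v j, x⟫_𝕜 • v j := by
    conv_lhs => rw [← v.sum_repr' x]
    simp only [map_sum, map_smul, hv, smul_comm (⟪v _, x⟫_𝕜)]
  simp only [hTx, inner_sum, inner_smul_right, map_sum]
  refine sum_congr rfl fun j _ => ?_
  rw [← inner_conj_symm, RCLike.conj_mul, RCLike.norm_conj, ← RCLike.ofReal_pow,
    RCLike.re_ofReal_mul, RCLike.ofReal_re]

theorem OrthonormalBasis.mul_norm_sq_le_re_inner_map_self (hv : ∀ j, T (v j) = (e j : 𝕜) • v j)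
    {x : E} {c : ℝ} (hc : ∀ j, ⟪v j, x⟫_𝕜 ≠ 0 → c ≤ e j) : c * ‖x‖ ^ 2 ≤ RCLike.re ⟪x, T x⟫_𝕜 := by
  rw [v.re_inner_map_self_eq hv, ← v.sum_sq_norm_inner_right, mul_sum]
  refine sum_le_sum fun j _ => ?_
  by_cases hj : ⟪v j, x⟫_𝕜 = 0
  · simp [hj]
  · exact mul_le_mul_of_nonneg_right (hc j hj) (sq_nonneg _)

theorem OrthonormalBasis.re_inner_map_self_le_mul_norm_sq (hv : ∀ j, T (v j) = (e j : 𝕜) • v j)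
    {x : E} {c : ℝ} (hc : ∀ j, ⟪v j, x⟫_𝕜 ≠ 0 → e j ≤ c) : RCLike.re ⟪x, T x⟫_𝕜 ≤ c * ‖x‖ ^ 2 := by
  rw [v.re_inner_map_self_eq hv, ← v.sum_sq_norm_inner_right, mul_sum]
  refine sum_le_sum fun j _ => ?_
  by_cases hj : ⟪v j, x⟫_𝕜 = 0
  · simp [hj]
  · exact mul_le_mul_of_nonneg_right (hc j hj) (sq_nonneg _)

end Rayleigh

theorem exists_ne_zero_forall_inner_eq_zero {𝕜 E κ : Type*} [RCLike 𝕜] [NormedAddCommGroup E]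
    [InnerProductSpace 𝕜 E] [FiniteDimensional 𝕜 E] [Fintype κ] (u : κ → E)
    (h : Fintype.card κ < Module.finrank 𝕜 E) : ∃ x ≠ 0, ∀ k, ⟪u k, x⟫_𝕜 = 0 := by
  have hker := (LinearMap.pi fun k => innerₛₗ 𝕜 (u k)).ker_ne_bot_of_finrank_lt
    (by rwa [Module.finrank_fintype_fun_eq_card])
  obtain ⟨x, hx, hx0⟩ := Submodule.exists_mem_ne_zero_of_ne_bot hker
  exact ⟨x, hx0, fun k => congrFun hx k⟩

theorem eigenvalue_le_of_isPositive_sub {𝕜 E : Type*} [RCLike 𝕜] [NormedAddCommGroup E]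
    [InnerProductSpace 𝕜 E] {n : ℕ} {T₁ T₂ : E →ₗ[𝕜] E} (hT : (T₂ - T₁).IsPositive)
    {p q : Fin n → ℝ} (hp : Antitone p) (hq : Antitone q) {v w : OrthonormalBasis (Fin n) 𝕜 E}
    (hv : ∀ j, T₁ (v j) = (p j : 𝕜) • v j) (hw : ∀ j, T₂ (w j) = (q j : 𝕜) • w j) (i : Fin n) :
    p i ≤ q i := by
  have : FiniteDimensional 𝕜 E := v.toBasis.finiteDimensional_of_finite
  obtain ⟨x, hx0, hx⟩ := exists_ne_zero_forall_inner_eq_zero (𝕜 := 𝕜)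
    (Sum.elim (fun j : Ioi i => v j) (fun j : Iio i => w j)) <| by
      rw [Fintype.card_sum, Fintype.card_coe, Fintype.card_coe, Fin.card_Ioi, Fin.card_Iio,
        Module.finrank_eq_card_basis v.toBasis, Fintype.card_fin]
      omega
  have hv0 (j) (hj : ⟪v j, x⟫_𝕜 ≠ 0) : j ≤ i :=
    not_lt.mp fun hij => hj (hx (.inl ⟨j, mem_Ioi.mpr hij⟩))
  have hw0 (j) (hj : ⟪w j, x⟫_𝕜 ≠ 0) : i ≤ j :=
    not_lt.mp fun hji => hj (hx (.inr ⟨j, mem_Iio.mpr hji⟩))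
  have hx2 : 0 < ‖x‖ ^ 2 := by positivity
  refine le_of_mul_le_mul_right ?_ hx2
  calc p i * ‖x‖ ^ 2 ≤ RCLike.re ⟪x, T₁ x⟫_𝕜 :=
        v.mul_norm_sq_le_re_inner_map_self hv fun j hj => hp (hv0 j hj)
    _ ≤ RCLike.re ⟪x, T₂ x⟫_𝕜 := by
        simpa [inner_sub_right] using hT.re_inner_nonneg_right x
    _ ≤ q i * ‖x‖ ^ 2 := w.re_inner_map_self_le_mul_norm_sq hw fun j hj => hq (hw0 j hj)

namespace Matrix

variable {𝕜 ι : Type*} [RCLike 𝕜] [Fintype ι] [DecidableEq ι]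

theorem trace_eq_sum_of_roots_charpoly_eq {K : Type*} [Field K] {A : Matrix ι ι K} {a : ι → K}
    (h : A.charpoly.roots = univ.val.map a) : A.trace = ∑ i, a i := by
  have hsplit : A.charpoly.Splits := Polynomial.splits_iff_card_roots.mpr (by simp [h])
  rw [trace_eq_sum_roots_charpoly_of_splits hsplit, h]
  rfl

namespace IsHermitian

variable {A : Matrix ι ι 𝕜}

theorem exists_perm_eigenvalues_comp_eq (hA : A.IsHermitian) {α : ι → ℝ}
    (hα : A.charpoly.roots = univ.val.map fun i => (α i : 𝕜)) :
    ∃ σ : Equiv.Perm ι, hA.eigenvalues ∘ σ = α := by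
  refine exists_perm_comp_eq_of_map_univ_eq
    (Multiset.map_injective (RCLike.ofReal_injective (K := 𝕜)) ?_)
  rw [Multiset.map_map, Multiset.map_map, ← hA.roots_charpoly_eq_eigenvalues, hα]
  rfl

theorem exists_orthonormalBasis_toEuclideanLin_eq_smul (hA : A.IsHermitian) {α : ι → ℝ}
    (hα : A.charpoly.roots = univ.val.map fun i => (α i : 𝕜)) :
    ∃ v : OrthonormalBasis ι 𝕜 (EuclideanSpace 𝕜 ι),
      ∀ j, A.toEuclideanLin (v j) = (α j : 𝕜) • v j := by
  obtain ⟨σ, rfl⟩ := hA.exists_perm_eigenvalues_comp_eq hα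
  refine ⟨hA.eigenvectorBasis.reindex σ.symm, fun j => ?_⟩
  simp only [OrthonormalBasis.reindex_apply, Equiv.symm_symm, toLpLin_apply,
    mulVec_eigenvectorBasis, Function.comp_apply, RCLike.real_smul_eq_coe_smul (K := 𝕜)]
  rfl

theorem roots_charpoly_cfc (hA : A.IsHermitian) (f : ℝ → ℝ) :
    (cfc f A).charpoly.roots = univ.val.map fun i => (f (hA.eigenvalues i) : 𝕜) := by
  rw [hA.charpoly_cfc_eq, Polynomial.roots_prod]
  · simp
  · simp [Finset.prod_ne_zero_iff, Polynomial.X_sub_C_ne_zero]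

theorem exists_antitone_roots_charpoly {n : ℕ} {A : Matrix (Fin n) (Fin n) 𝕜}
    (hA : A.IsHermitian) :
    ∃ α : Fin n → ℝ, Antitone α ∧ A.charpoly.roots = univ.val.map fun i => (α i : 𝕜) := by
  refine ⟨hA.eigenvalues₀ ∘ Fin.cast (Fintype.card_fin n).symm,
    hA.eigenvalues₀_antitone.comp_monotone (Fin.cast_strictMono _).monotone, ?_⟩
  rw [hA.roots_charpoly_eq_eigenvalues₀,
    ← Multiset.map_univ_val_equiv (finCongr (Fintype.card_fin n)), Multiset.map_map]
  rfl

end IsHermitian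

end Matrix

open scoped MatrixOrder ComplexOrder

theorem Matrix.eigenvalue_le_of_le {𝕜 : Type*} [RCLike 𝕜] {n : ℕ}
    {P Q : Matrix (Fin n) (Fin n) 𝕜} (hPQ : P ≤ Q) {p q : Fin n → ℝ} (hp : Antitone p)
    (hq : Antitone q) {v w : OrthonormalBasis (Fin n) 𝕜 (EuclideanSpace 𝕜 (Fin n))}
    (hv : ∀ j, P.toEuclideanLin (v j) = (p j : 𝕜) • v j)
    (hw : ∀ j, Q.toEuclideanLin (w j) = (q j : 𝕜) • w j) (i : Fin n) : p i ≤ q i :=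
  eigenvalue_le_of_isPositive_sub
    (by rw [← map_sub, Matrix.isPositive_toEuclideanLin_iff]; exact hPQ) hp hq hv hw i

theorem sum_le_card_mul_add_sum_max_sub_add_sum {𝕜 : Type*} [RCLike 𝕜] {n : ℕ}
    {B C : Matrix (Fin n) (Fin n) 𝕜} (hB : B.IsHermitian) (hC : C.IsHermitian)
    {α β γ : Fin n → ℝ} (hα : Antitone α) (hγ : Antitone γ)
    (hαs : (B + C).charpoly.roots = univ.val.map fun i => (α i : 𝕜))
    (hβs : B.charpoly.roots = univ.val.map fun i => (β i : 𝕜))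
    (hγs : C.charpoly.roots = univ.val.map fun i => (γ i : 𝕜)) (I : Finset (Fin n)) (t : ℝ) :
    ∑ i ∈ I, α i ≤ #I * t + ∑ j, max (β j - t) 0 + ∑ i ∈ I, γ i := by
  set N := cfc (fun x => max (x - t) 0) B
  have hN : 0 ≤ N := cfc_nonneg fun x _ => le_max_right _ _
  have hBN : B - algebraMap ℝ _ t ≤ N := by
    rw [← cfc_id' ℝ B, ← cfc_const t B, ← cfc_sub (fun x => x) (fun _ => t) B]
    exact cfc_mono fun x _ => le_max_left _ _
  have hD : (C + N).IsHermitian := hC.add (Matrix.nonneg_iff_posSemidef.mp hN).isHermitian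
  obtain ⟨δ, hδ, hδs⟩ := hD.exists_antitone_roots_charpoly
  obtain ⟨u, hu⟩ := (hB.add hC).exists_orthonormalBasis_toEuclideanLin_eq_smul hαs
  obtain ⟨w, hw⟩ := hC.exists_orthonormalBasis_toEuclideanLin_eq_smul hγs
  obtain ⟨z, hz⟩ := hD.exists_orthonormalBasis_toEuclideanLin_eq_smul hδs
  have hγδ (i) : γ i ≤ δ i := Matrix.eigenvalue_le_of_le (le_add_of_nonneg_right hN) hγ hδ hw hz i
  have hαδ (i) : α i - t ≤ δ i := by
    refine Matrix.eigenvalue_le_of_le (P := B + C - algebraMap ℝ _ t) (p := fun i => α i - t)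
      (v := u) ?_ (fun i j hij => by simpa using hα hij) hδ (fun j => ?_) hz i
    · rw [add_sub_right_comm, add_comm C]
      exact add_le_add_left hBN C
    · rw [map_sub, LinearMap.sub_apply, hu j]
      simp [Algebra.algebraMap_eq_smul_one, sub_smul, Matrix.toLpLin_apply, Matrix.smul_mulVec]
  have htrace : ∑ i, δ i = ∑ i, γ i + ∑ j, max (β j - t) 0 := by
    obtain ⟨σ, hσ⟩ := hB.exists_perm_eigenvalues_comp_eq hβs
    have hβ : ∑ j, max (β j - t) 0 = ∑ j, max (hB.eigenvalues j - t) 0 := by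
      rw [← hσ]
      exact Equiv.sum_comp σ fun j => max (hB.eigenvalues j - t) 0
    have := Matrix.trace_eq_sum_of_roots_charpoly_eq hδs
    rw [Matrix.trace_add, Matrix.trace_eq_sum_of_roots_charpoly_eq hγs,
      Matrix.trace_eq_sum_of_roots_charpoly_eq (hB.roots_charpoly_cfc _)] at this
    rw [hβ]
    exact_mod_cast this.symm
  calc ∑ i ∈ I, α i = #I * t + ∑ i ∈ I, (α i - t - γ i) + ∑ i ∈ I, γ i := by
        simp only [sum_sub_distrib, sum_const, nsmul_eq_mul]; ring
    _ ≤ #I * t + ∑ i, (δ i - γ i) + ∑ i ∈ I, γ i := by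
        gcongr
        calc ∑ i ∈ I, (α i - t - γ i) ≤ ∑ i ∈ I, (δ i - γ i) := by
              gcongr with i; linarith [hαδ i]
          _ ≤ ∑ i, (δ i - γ i) :=
              sum_le_sum_of_subset_of_nonneg (subset_univ I) fun i _ _ => by linarith [hγδ i]
    _ = _ := by rw [sum_sub_distrib, htrace]; ring

theorem Antitone.sum_max_sub_eq_sum_Iic {n : ℕ} {β : Fin n → ℝ} (hβ : Antitone β) (m : Fin n) :
    ∑ j, max (β j - β m) 0 = ∑ j ∈ Iic m, (β j - β m) := by
  rw [← sum_subset (subset_univ (Iic m)) fun j _ hj =>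
    max_eq_right (sub_nonpos.mpr (hβ (not_le.mp (mem_Iic.not.mp hj)).le))]
  exact sum_congr rfl fun j hj => max_eq_left (sub_nonneg.mpr (hβ (mem_Iic.mp hj)))

namespace LapPaper

theorem wielandt_general (n : ℕ) (A B C : Matrix (Fin n) (Fin n) ℂ)
    (hB : B.IsHermitian) (hC : C.IsHermitian) (hABC : A = B + C)
    (α β γ : Fin n → ℝ) (hα : Antitone α) (hβ : Antitone β) (hγ : Antitone γ)
    (hαs : A.charpoly.roots = Multiset.map (fun i => (α i : ℂ)) (Finset.univ : Finset (Fin n)).val)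
    (hβs : B.charpoly.roots = Multiset.map (fun i => (β i : ℂ)) (Finset.univ : Finset (Fin n)).val)
    (hγs : C.charpoly.roots = Multiset.map (fun i => (γ i : ℂ)) (Finset.univ : Finset (Fin n)).val) :
    ∀ I : Finset (Fin n),
      ∑ i ∈ I, α i ≤
        (∑ j ∈ Finset.univ.filter (fun j : Fin n => j.1 < I.card), β j) + ∑ i ∈ I, γ i := by
  intro I
  subst hABC
  obtain rfl | hI := I.eq_empty_or_nonempty
  · simp
  have hk : 0 < #I := hI.card_pos
  have hkn : #I ≤ n := by simpa using card_le_univ I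
  set m : Fin n := ⟨#I - 1, by omega⟩
  have hIic : univ.filter (fun j : Fin n => j.1 < #I) = Iic m := by
    ext j
    simp only [mem_filter, mem_univ, true_and, mem_Iic, Fin.le_def, m]
    omega
  have hm : (m : ℕ) + 1 = #I := Nat.sub_add_cancel hk
  have key := sum_le_card_mul_add_sum_max_sub_add_sum hB hC hα hγ hαs hβs hγs I (β m)
  rw [hβ.sum_max_sub_eq_sum_Iic m, sum_sub_distrib, sum_const, Fin.card_Iic, hm,
    nsmul_eq_mul] at key
  rw [hIic]
  linarith

/-- Wielandt: Let `A = B + C` be Hermitian matrices of order `n`, and let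
`α, β, γ : Fin n → ℝ` list the eigenvalues of `A`, `B`, `C` respectively in nonincreasing
order (with multiplicity, i.e. the roots of the characteristic polynomials). Then for any
subset `I ⊆ {1, …, n}` we have `∑_{i ∈ I} λ_i(A) ≤ ∑_{i=1}^{|I|} λ_i(B) + ∑_{i ∈ I} λ_i(C)`. -/
theorem wielandt (n : ℕ) (A B C : Matrix (Fin n) (Fin n) ℂ)
    (hA : A.IsHermitian) (hB : B.IsHermitian) (hC : C.IsHermitian) (hABC : A = B + C)
    (α β γ : Fin n → ℝ) (hα : Antitone α) (hβ : Antitone β) (hγ : Antitone γ)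
    (hαs : A.charpoly.roots = Multiset.map (fun i => (α i : ℂ)) (Finset.univ : Finset (Fin n)).val)
    (hβs : B.charpoly.roots = Multiset.map (fun i => (β i : ℂ)) (Finset.univ : Finset (Fin n)).val)
    (hγs : C.charpoly.roots = Multiset.map (fun i => (γ i : ℂ)) (Finset.univ : Finset (Fin n)).val) :
    ∀ I : Finset (Fin n),
      ∑ i ∈ I, α i ≤
        (∑ j ∈ Finset.univ.filter (fun j : Fin n => j.1 < I.card), β j) + ∑ i ∈ I, γ i :=
  wielandt_general n A B C hB hC hABC α β γ hα hβ hγ hαs hβs hγs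

end LapPaper
end

section
/- If T is a tree with n vertices that is not a star, and μ_1 is the largest Laplacian eigenvalue of T, then μ_1 < n − 1/2. -/
open Polynomial

/-!
Conjugating the Laplacian `L` by the degree matrix `D`, the absolute row sum of `D⁻¹ L D` at `v`
is `d_v + m_v`, where `m_v` is the average degree of the neighbours of `v`; Gershgorin's argument
gives Merris' bound `μ₁ ≤ max_v (d_v + m_v)`. In a tree the neighbours of `v` have pairwise
disjoint edge sets, so `d_v m_v ≤ n - 1`, and not being a star means `d_v ≤ n - 2`, which forces
`n ≥ 4`. Then `d_v + m_v ≤ n - 1/2`, with equality only at a vertex of degree `2` of the path on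
four vertices. Such a vertex has a leaf neighbour, whose row sum is smaller, and a strict form of
Gershgorin's argument excludes equality.
-/

namespace LapPaper

open Finset Matrix

section RowSum

variable {ι : Type*} [Fintype ι] {M : Matrix ι ι ℝ} {x : ι → ℝ} {μ B : ℝ}

lemma abs_mul_le_sum_abs_mul (hx : M *ᵥ x = μ • x) (i : ι) :
    |μ| * |x i| ≤ ∑ j, |M i j| * |x j| := by
  have hi : μ * x i = ∑ j, M i j * x j := by
    simpa [mulVec, dotProduct] using (congrFun hx i).symm
  calc |μ| * |x i| = |∑ j, M i j * x j| := by rw [← abs_mul, hi]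
    _ ≤ ∑ j, |M i j * x j| := abs_sum_le_sum_abs _ _
    _ = ∑ j, |M i j| * |x j| := by simp_rw [abs_mul]

lemma rowSum_eq_and_abs_eq_of_le_abs (hx : M *ᵥ x = μ • x)
    (hrow : ∀ i, ∑ j, |M i j| ≤ B) (hB : B ≤ |μ|) {i : ι} (hi : 0 < |x i|)
    (hmax : ∀ j, |x j| ≤ |x i|) :
    ∑ j, |M i j| = B ∧ ∀ j, M i j ≠ 0 → |x j| = |x i| := by
  have hterm : ∀ j, |M i j| * |x j| ≤ |M i j| * |x i| := fun j =>
    mul_le_mul_of_nonneg_left (hmax j) (abs_nonneg _)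
  have hlow : B * |x i| ≤ ∑ j, |M i j| * |x j| :=
    (mul_le_mul_of_nonneg_right hB hi.le).trans (abs_mul_le_sum_abs_mul hx i)
  have hrowi : (∑ j, |M i j|) * |x i| ≤ B * |x i| := mul_le_mul_of_nonneg_right (hrow i) hi.le
  refine ⟨le_antisymm (hrow i) (le_of_mul_le_mul_right ?_ hi), fun j hj => ?_⟩
  · rw [sum_mul]
    exact hlow.trans (sum_le_sum fun j _ => hterm j)
  · by_contra hne
    have hlt : |M i j| * |x j| < |M i j| * |x i| :=
      mul_lt_mul_of_pos_left ((hmax j).lt_of_ne hne) (abs_pos.2 hj)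
    have := sum_lt_sum (fun k _ => hterm k) ⟨j, mem_univ _, hlt⟩
    rw [← sum_mul] at this
    linarith

theorem abs_lt_of_rowSum_le (hx : M *ᵥ x = μ • x) (hx0 : x ≠ 0)
    (hrow : ∀ i, ∑ j, |M i j| ≤ B)
    (hstrict : ∀ i, ∑ j, |M i j| = B → ∃ j, M i j ≠ 0 ∧ ∑ k, |M j k| < B) :
    |μ| < B := by
  obtain ⟨j₀, hj₀⟩ := Function.ne_iff.1 hx0
  obtain ⟨i, -, hmax⟩ := exists_max_image univ (fun i => |x i|) ⟨j₀, mem_univ _⟩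
  have hi : 0 < |x i| := (abs_pos.2 hj₀).trans_le (hmax j₀ (mem_univ _))
  by_contra! hB
  obtain ⟨hiB, hnbr⟩ := rowSum_eq_and_abs_eq_of_le_abs hx hrow hB hi fun j => hmax j (mem_univ _)
  obtain ⟨j, hij, hjB⟩ := hstrict i hiB
  have hxj := hnbr j hij
  have := (rowSum_eq_and_abs_eq_of_le_abs hx hrow hB (hxj ▸ hi)
    fun k => hxj ▸ hmax k (mem_univ _)).1
  linarith

end RowSum

lemma exists_mulVec_eq_smul_of_mem_roots_charpoly {ι K : Type*} [Fintype ι] [DecidableEq ι]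
    [Field K] {A : Matrix ι ι K} {μ : K} (h : μ ∈ A.charpoly.roots) :
    ∃ x ≠ 0, A *ᵥ x = μ • x := by
  have hroot := (Polynomial.mem_roots'.1 h).2
  rw [← charpoly_toLin', ← Module.End.hasEigenvalue_iff_isRoot_charpoly] at hroot
  obtain ⟨x, hx⟩ := hroot.exists_hasEigenvector
  exact ⟨x, hx.2, by simpa using Module.End.mem_eigenspace_iff.1 hx.1⟩

lemma mulVec_div_eq_smul {ι : Type*} [Fintype ι] {A : Matrix ι ι ℝ} {x w : ι → ℝ} {μ : ℝ}
    (hw : ∀ i, w i ≠ 0) (hx : A *ᵥ x = μ • x) :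
    of (fun i j => A i j * w j / w i) *ᵥ (x / w) = μ • (x / w) := by
  ext i
  have hi := congrFun hx i
  simp only [mulVec, dotProduct, Pi.smul_apply, smul_eq_mul] at hi
  simp only [mulVec, dotProduct, of_apply, Pi.div_apply, Pi.smul_apply, smul_eq_mul]
  calc ∑ j, A i j * w j / w i * (x j / w j) = (∑ j, A i j * x j) / w i := by
        rw [sum_div]
        exact sum_congr rfl fun j _ => by field_simp [hw i, hw j]
    _ = μ * (x i / w i) := by rw [hi, mul_div_assoc]

section Laplacian

variable {V : Type*} [Fintype V] [DecidableEq V] (G : SimpleGraph V) [DecidableRel G.Adj]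

lemma abs_lapMatrix_apply (i j : V) :
    |G.lapMatrix ℝ i j| = (G.degMatrix ℝ + G.adjMatrix ℝ) i j := by
  by_cases h : i = j
  · subst h
    simp [SimpleGraph.lapMatrix, SimpleGraph.degMatrix]
  · by_cases hadj : G.Adj i j <;>
      simp [SimpleGraph.lapMatrix, SimpleGraph.degMatrix, h, hadj]

lemma sum_abs_lapMatrix_mul (w : V → ℝ) (i : V) :
    ∑ j, |G.lapMatrix ℝ i j| * w j = G.degree i * w i + ∑ j ∈ G.neighborFinset i, w j := by
  simp_rw [abs_lapMatrix_apply]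
  rw [← SimpleGraph.degMatrix_mulVec_apply, ← SimpleGraph.adjMatrix_mulVec_apply, ← Pi.add_apply,
    ← add_mulVec]
  rfl

end Laplacian

section Merris

variable {V : Type} [Fintype V] (G : SimpleGraph V) [DecidableRel G.Adj]

/-- Merris' `d_v + m_v`, where `m_v` is the average degree of the neighbours of `v`. -/
noncomputable def degAddAvgNeighborDegree (v : V) : ℝ :=
  G.degree v + (∑ u ∈ G.neighborFinset v, (G.degree u : ℝ)) / G.degree v

variable {G}

lemma sum_abs_lapMatrix_mul_degree_div [DecidableEq V] {i : V} (hi : 0 < G.degree i) :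
    ∑ j, |G.lapMatrix ℝ i j * G.degree j / G.degree i| = degAddAvgNeighborDegree G i := by
  have hi' : (0 : ℝ) < G.degree i := by exact_mod_cast hi
  simp_rw [abs_div, abs_mul, Nat.abs_cast, ← sum_div, sum_abs_lapMatrix_mul]
  rw [degAddAvgNeighborDegree, add_div, mul_div_assoc, div_self hi'.ne', mul_one]

lemma lapMatrix_apply_ne_zero_of_adj [DecidableEq V] {i j : V} (h : G.Adj i j) :
    G.lapMatrix ℝ i j ≠ 0 := by
  simp [SimpleGraph.lapMatrix, SimpleGraph.degMatrix, h, h.ne]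

/-- A strict form of Merris' bound, from the row sums of `D⁻¹ L D`. -/
theorem lt_of_mem_lapSpectrum [DecidableEq V] (hdeg : ∀ v, 0 < G.degree v) {B : ℝ}
    (hle : ∀ v, degAddAvgNeighborDegree G v ≤ B)
    (hlt : ∀ v, degAddAvgNeighborDegree G v = B →
      ∃ u, G.Adj v u ∧ degAddAvgNeighborDegree G u < B)
    {μ : ℝ} (hμ : μ ∈ lapSpectrum G) : μ < B := by
  obtain ⟨x, hx0, hx⟩ := exists_mulVec_eq_smul_of_mem_roots_charpoly hμ
  have hd : ∀ v, (G.degree v : ℝ) ≠ 0 := fun v => Nat.cast_ne_zero.2 (hdeg v).ne'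
  have hscaled := mulVec_div_eq_smul hd hx
  have hrow := fun i => sum_abs_lapMatrix_mul_degree_div (hdeg i)
  refine (le_abs_self μ).trans_lt (abs_lt_of_rowSum_le hscaled ?_ ?_ ?_)
  · intro hzero
    refine hx0 (funext fun v => ?_)
    simpa [hd v] using congrFun hzero v
  · simpa only [of_apply, hrow] using hle
  · intro i hi
    simp only [of_apply, hrow] at hi ⊢
    obtain ⟨j, hij, hj⟩ := hlt i hi
    exact ⟨j, div_ne_zero (mul_ne_zero (lapMatrix_apply_ne_zero_of_adj hij) (hd j)) (hd i), hj⟩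

end Merris

section TriangleFree

variable {V : Type*} [Fintype V] {G : SimpleGraph V}

-- The edge sets at the neighbours of a vertex are pairwise disjoint.
lemma sum_degree_neighborFinset_le_card_edgeFinset [DecidableEq V] [DecidableRel G.Adj]
    (h : G.CliqueFree 3) (i : V) :
    ∑ j ∈ G.neighborFinset i, G.degree j ≤ #G.edgeFinset := by
  have hdisj : (G.neighborFinset i : Set V).PairwiseDisjoint fun j => G.incidenceFinset j := by
    intro j hj k hk hjk
    have hnadj : ¬G.Adj j k := SimpleGraph.isIndepSet_neighborSet_of_triangleFree G h i
      (by simpa using hj) (by simpa using hk) hjk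
    simp [Function.onFun, ← Finset.disjoint_coe, Set.disjoint_iff_inter_eq_empty,
      G.incidenceSet_inter_incidenceSet_of_not_adj hnadj hjk]
  calc ∑ j ∈ G.neighborFinset i, G.degree j
      = ∑ j ∈ G.neighborFinset i, #(G.incidenceFinset j) := by
        simp only [SimpleGraph.card_incidenceFinset_eq_degree]
    _ = #((G.neighborFinset i).biUnion fun j => G.incidenceFinset j) := (card_biUnion hdisj).symm
    _ ≤ #G.edgeFinset := card_le_card (biUnion_subset.2 fun j _ => G.incidenceFinset_subset j)

lemma nonempty_iso_starGraph_of_isUniversal (h : G.CliqueFree 3) {n : ℕ}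
    (hcard : Fintype.card V = n) {v : V} (hv : G.IsUniversal v) :
    Nonempty (G ≃g starGraph n) := by
  classical
  have hn : 0 < n := hcard ▸ Fintype.card_pos_iff.2 ⟨v⟩
  let e₀ := Fintype.equivFinOfCardEq hcard
  let e : V ≃ Fin n := e₀.trans (Equiv.swap (e₀ v) ⟨0, hn⟩)
  have he : ∀ a, (e a).1 = 0 ↔ a = v := by
    intro a
    rw [← e.injective.eq_iff, Fin.ext_iff]
    simp [e]
  have hadj : ∀ a b, G.Adj a b ↔ a ≠ b ∧ (a = v ∨ b = v) := by
    intro a b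
    refine ⟨fun hab => ⟨hab.ne, ?_⟩, ?_⟩
    · by_contra! hav
      exact h {v, a, b} (SimpleGraph.is3Clique_triple_iff.2
        ⟨hv (Ne.symm hav.1), hv (Ne.symm hav.2), hab⟩)
    · rintro ⟨hab, rfl | rfl⟩
      · exact hv hab
      · exact (hv (Ne.symm hab)).symm
  exact ⟨⟨e, fun {a b} => by simp [starGraph, hadj, he, e.injective.ne_iff]⟩⟩

end TriangleFree

lemma add_div_lt_or_eq {n d S : ℝ} (hn : 4 ≤ n) (hd : 2 ≤ d) (hdn : d ≤ n - 2)
    (hS : S ≤ n - 1) : d + S / d < n - 1 / 2 ∨ d = 2 ∧ S = 3 ∧ n = 4 := by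
  have hd0 : 0 < d := by linarith
  have hprod : 0 ≤ (d - 2) * (n - 2 - d) := mul_nonneg (by linarith) (by linarith)
  have key : n - 1 / 2 - (d + S / d) =
      ((d - 2) * (n - 2 - d) + (n - 2 - d) / 2 + (n - 4) / 2 + (n - 1 - S)) / d := by
    field_simp
    ring
  rcases (show (0 : ℝ) ≤ (n - 2 - d) + (n - 4) + (n - 1 - S) by linarith).eq_or_lt with h | h
  · exact Or.inr ⟨by linarith, by linarith, by linarith⟩
  · exact Or.inl (sub_pos.1 (key ▸ div_pos (by linarith) hd0))

lemma exists_adj_degree_eq_one {V : Type*} [Fintype V] [DecidableEq V] {G : SimpleGraph V}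
    [DecidableRel G.Adj] (hpos : ∀ v, 0 < G.degree v) {v : V} (hv : G.degree v = 2)
    (hS : ∑ u ∈ G.neighborFinset v, G.degree u = 3) : ∃ u, G.Adj v u ∧ G.degree u = 1 := by
  rw [← G.card_neighborFinset_eq_degree] at hv
  obtain ⟨a, b, hab, hN⟩ := card_eq_two.1 hv
  rw [hN, sum_pair hab] at hS
  have ha : G.Adj v a := (G.mem_neighborFinset v a).1 (by simp [hN])
  have hb : G.Adj v b := (G.mem_neighborFinset v b).1 (by simp [hN])
  have := hpos a
  have := hpos b
  by_cases h : G.degree a = 1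
  exacts [⟨a, ha, h⟩, ⟨b, hb, by omega⟩]

section Tree

variable {V : Type} [Fintype V] {T : SimpleGraph V} [DecidableRel T.Adj] {n : ℕ}

lemma degree_add_two_le_of_isEmpty_iso (hT : T.IsTree) (hcard : Fintype.card V = n)
    (hstar : IsEmpty (T ≃g starGraph n)) (v : V) : T.degree v + 2 ≤ n := by
  have := (T.degree_lt_card_sub_one v).2 fun hv =>
    hstar.false
      (nonempty_iso_starGraph_of_isUniversal (hT.isAcyclic.cliqueFree le_rfl) hcard hv).some
  omega

lemma four_le_of_degree_add_two_le (hT : T.IsTree) (hcard : Fintype.card V = n)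
    (hdeg : ∀ v, T.degree v + 2 ≤ n) : 4 ≤ n := by
  obtain ⟨v⟩ := hT.connected.nonempty
  have hv := hdeg v
  have hsum : ∑ v, (T.degree v + 2) ≤ ∑ _v : V, n := sum_le_sum fun v _ => hdeg v
  simp only [sum_add_distrib, T.sum_degrees_eq_twice_card_edges, sum_const, card_univ, hcard,
    smul_eq_mul] at hsum
  have hE := hT.card_edgeFinset
  by_contra! hn
  interval_cases n <;> omega

lemma degAddAvgNeighborDegree_lt_of_degree_eq_one (hdeg : ∀ v, T.degree v + 2 ≤ n) {v : V}
    (hv : T.degree v = 1) : degAddAvgNeighborDegree T v < n - 1 / 2 := by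
  rw [← T.card_neighborFinset_eq_degree] at hv
  obtain ⟨u, hu⟩ := card_eq_one.1 hv
  have hu2 : (T.degree u : ℝ) + 2 ≤ n := by exact_mod_cast hdeg u
  rw [degAddAvgNeighborDegree, ← T.card_neighborFinset_eq_degree, hu, sum_singleton,
    card_singleton]
  norm_num
  linarith

lemma degAddAvgNeighborDegree_lt_or_exists_leaf [DecidableEq V] (hT : T.IsTree)
    (hcard : Fintype.card V = n) (hdeg : ∀ v, T.degree v + 2 ≤ n) (v : V) :
    degAddAvgNeighborDegree T v < n - 1 / 2 ∨
      degAddAvgNeighborDegree T v = n - 1 / 2 ∧ ∃ u, T.Adj v u ∧ T.degree u = 1 := by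
  have hn : 4 ≤ n := four_le_of_degree_add_two_le hT hcard hdeg
  have : Nontrivial V := Fintype.one_lt_card_iff_nontrivial.1 (by omega)
  have hpos : ∀ v, 0 < T.degree v := fun v => hT.connected.preconnected.degree_pos_of_nontrivial v
  have hS : ∑ u ∈ T.neighborFinset v, T.degree u + 1 ≤ n := by
    have := sum_degree_neighborFinset_le_card_edgeFinset (hT.isAcyclic.cliqueFree le_rfl) v
    have := hT.card_edgeFinset
    omega
  by_cases hv : T.degree v = 1
  · exact Or.inl (degAddAvgNeighborDegree_lt_of_degree_eq_one hdeg hv)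
  have hv2 : 2 ≤ T.degree v := by have := hpos v; omega
  have hSR : ∑ u ∈ T.neighborFinset v, (T.degree u : ℝ) + 1 ≤ n := by exact_mod_cast hS
  have hvR : (T.degree v : ℝ) + 2 ≤ n := by exact_mod_cast hdeg v
  rcases add_div_lt_or_eq (n := n) (d := T.degree v) (by exact_mod_cast hn)
    (by exact_mod_cast hv2) (by linarith) (by linarith) with h | ⟨hd, hS3, hn4⟩
  · exact Or.inl h
  · refine Or.inr
      ⟨?_, exists_adj_degree_eq_one hpos (by exact_mod_cast hd) (by exact_mod_cast hS3)⟩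
    rw [degAddAvgNeighborDegree, hd, hS3, hn4]
    norm_num

end Tree

lemma Sk_one_lt {V : Type} [Fintype V] [DecidableEq V] {G : SimpleGraph V} [DecidableRel G.Adj]
    {B : ℝ} (hB : 0 < B) (h : ∀ μ ∈ lapSpectrum G, μ < B) : Sk G 1 < B := by
  rw [Sk]
  rcases hl : ((lapSpectrum G).sort (· ≤ ·)).reverse with _ | ⟨μ, l⟩
  · simpa using hB
  · have hμ : μ ∈ lapSpectrum G := by
      rw [← Multiset.mem_sort (· ≤ ·), ← List.mem_reverse, hl]
      exact List.mem_cons_self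
    simpa using h μ hμ

/-- If `T` is a tree with `n` vertices that is not a star, then its largest
Laplacian eigenvalue `μ₁ = S₁(T)` satisfies `μ₁ < n - 1/2`. -/
theorem mu_one_lt_of_not_star {V : Type} [Fintype V] [DecidableEq V]
    (T : SimpleGraph V) [DecidableRel T.Adj] (n : ℕ) (hcard : Fintype.card V = n)
    (hT : T.IsTree) (hstar : IsEmpty (T ≃g starGraph n)) :
    Sk T 1 < (n : ℝ) - 1 / 2 := by
  have hdeg := degree_add_two_le_of_isEmpty_iso hT hcard hstar
  have hn : 4 ≤ n := four_le_of_degree_add_two_le hT hcard hdeg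
  have : Nontrivial V := Fintype.one_lt_card_iff_nontrivial.1 (by omega)
  have hrow := degAddAvgNeighborDegree_lt_or_exists_leaf hT hcard hdeg
  refine Sk_one_lt (by linarith [(Nat.ofNat_le_cast.2 hn : (4 : ℝ) ≤ n)]) fun μ hμ =>
    lt_of_mem_lapSpectrum (fun v => hT.connected.preconnected.degree_pos_of_nontrivial v)
      (fun v => (hrow v).elim le_of_lt fun h => h.1.le) (fun v hv => ?_) hμ
  obtain ⟨u, hvu, hu⟩ := ((hrow v).resolve_left hv.not_lt).2
  exact ⟨u, hvu, degAddAvgNeighborDegree_lt_of_degree_eq_one hdeg hu⟩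

end LapPaper
end
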